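/- Let a = 31207386885274502188173522132023665167365193670823768234185354856354918873864275 and M = 36812852443922071184402498913076070503146229820861211558347078871354783744850778, and for n ∈ ℕ set u_n = F_{3n}/2. Then for every integer x with x ≡ a (mod M) and all k, b ∈ ℕ, one has x² − u_{8+14k} ≠ 211^b and x² − u_{8+14k} ≠ −211^b. -/

import Mathlib

/-!
Everything is read modulo `589 = 19 · 31`, which divides the modulus `M`, so `x ≡ 572`.
The Fibonacci sequence has period `90` modulo `589`, and `211` has order `18` there, so `2u_n`
and `2 · 211^b` modulo `589` depend only on `n mod 30` and `b mod 18`; a finite check shows that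
`2 · 572² - F_{3n} ≢ ±2 · 211^b` for all of these residues, whatever `n` is.
-/

/-- `u n = F_{3n} / 2`, an integer since `F_{3n}` is always even. -/
def u (n : ℕ) : ℤ := (Nat.fib (3 * n) : ℤ) / 2

lemma two_mul_u (n : ℕ) : 2 * u n = Nat.fib (3 * n) :=
  Int.mul_ediv_cancel' (by exact_mod_cast Nat.fib_dvd 3 (3 * n) (dvd_mul_right 3 n))

namespace Nat

variable {R : Type*} [Semiring R] {p : ℕ}

theorem cast_fib_add_of_period (h₀ : (fib p : R) = 0) (h₁ : (fib (p + 1) : R) = 1) (n : ℕ) :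
    (fib (n + p) : R) = fib n := by
  cases n with
  | zero => simpa using h₀
  | succ n => rw [add_right_comm, add_comm n, fib_add]; simp [h₀, h₁]

theorem cast_fib_mod_of_period (h₀ : (fib p : R) = 0) (h₁ : (fib (p + 1) : R) = 1) (n : ℕ) :
    (fib n : R) = fib (n % p) := by
  conv_lhs => rw [← mod_add_div n p]
  induction n / p with
  | zero => simp
  | succ q ih => rw [mul_add_one, ← add_assoc, cast_fib_add_of_period h₀ h₁, ih]

end Nat

lemma cast_fib_three_mul_zmod_589 (n : ℕ) :
    (Nat.fib (3 * n) : ZMod 589) = Nat.fib (3 * (n % 30)) := by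
  rw [Nat.cast_fib_mod_of_period (p := 90) (by decide) (by decide), ← Nat.mul_mod_mul_left 3 n 30]

lemma two_mul_sq_sub_fib_ne_zmod_589 (n b : ℕ) :
    2 * 572 ^ 2 - (Nat.fib (3 * n) : ZMod 589) ≠ 2 * 211 ^ b ∧
      2 * 572 ^ 2 - (Nat.fib (3 * n) : ZMod 589) ≠ -(2 * 211 ^ b) := by
  have key : ∀ r < 30, ∀ c < 18,
      2 * 572 ^ 2 - (Nat.fib (3 * r) : ZMod 589) ≠ 2 * 211 ^ c ∧
        2 * 572 ^ 2 - (Nat.fib (3 * r) : ZMod 589) ≠ -(2 * 211 ^ c) := by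
    decide
  rw [cast_fib_three_mul_zmod_589, pow_eq_pow_mod b (by decide : (211 : ZMod 589) ^ 18 = 1)]
  exact key _ (n.mod_lt (by norm_num)) _ (b.mod_lt (by norm_num))

theorem sq_sub_u_ne_pm_pow_211_of_cast_eq {x : ℤ} (hx : (x : ZMod 589) = 572) (n b : ℕ) :
    x ^ 2 - u n ≠ 211 ^ b ∧ x ^ 2 - u n ≠ -(211 ^ b) := by
  have hcast {y : ℤ} (h : x ^ 2 - u n = y) :
      2 * 572 ^ 2 - (Nat.fib (3 * n) : ZMod 589) = 2 * (y : ZMod 589) := by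
    have h2u : 2 * (u n : ZMod 589) = Nat.fib (3 * n) := by
      exact_mod_cast congrArg Int.cast (two_mul_u n)
    rw [← hx, ← h, ← h2u]; push_cast; ring
  obtain ⟨hpos, hneg⟩ := two_mul_sq_sub_fib_ne_zmod_589 n b
  exact ⟨fun h ↦ hpos (by simpa using hcast h), fun h ↦ hneg (by simpa using hcast h)⟩

/-- Case 4.4 of the proof of Theorem 1.3: for every integer
`x ≡ a (mod M)` and all `k, b ∈ ℕ`, `x² - u_{8+14k}` is not `±211^b`. -/
theorem sq_sub_u_ne_pm_pow_211
    (x : ℤ)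
    (hx : x ≡ 31207386885274502188173522132023665167365193670823768234185354856354918873864275
      [ZMOD 36812852443922071184402498913076070503146229820861211558347078871354783744850778])
    (k b : ℕ) :
    x ^ 2 - u (8 + 14 * k) ≠ 211 ^ b ∧ x ^ 2 - u (8 + 14 * k) ≠ -(211 ^ b) := by
  have h589 : x ≡ 31207386885274502188173522132023665167365193670823768234185354856354918873864275
      [ZMOD 589] := hx.of_dvd (by norm_num)
  refine sq_sub_u_ne_pm_pow_211_of_cast_eq ?_ _ _
  rw [(ZMod.intCast_eq_intCast_iff' _ _ 589).mpr h589]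
  rfl
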